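/- arXiv:1705.02289 — 2 statements merged into one kernel-verified Lean document; each statement's English description precedes it below -/
import Mathlib

section
/- Let u¹,u²,u³,p : ℝ⁴ → ℝ be smooth and a(r) = α + β×r with constant α,β ∈ ℝ³, |a(r)| > 0. Define v = Σᵢ aⁱuⁱ, Δᵢ = uⁱ_t + Σⱼ uʲuⁱⱼ + pᵢ, Δ₄ = Σᵢuⁱᵢ, Δ₅ = Σᵢ aⁱpᵢ. For smooth f : ℝ → ℝ, the evolutionary vector field X = f(v)·(aⁱ/|a|²)·∂_{uⁱ} − (v·f(v)/|a|²)·∂_p (i.e., the first variation under uⁱ ↦ uⁱ + ε f(v)aⁱ/|a|², p ↦ p − ε v f(v)/|a|², at ε=0) satisfies X(Σᵢ aⁱΔᵢ + vΔ₄) = f'(v)·(ΣᵢaⁱΔᵢ − Δ₅) + f(v)·Δ₄ pointwise. Hence X is a sub-symmetry of the pressure-constrained Euler system. -/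
noncomputable def pd {n : ℕ} (i : Fin n) (f : (Fin n → ℝ) → ℝ) (x : Fin n → ℝ) : ℝ :=
  fderiv ℝ f x (Pi.single i 1)

def sp (x : Fin 4 → ℝ) : Fin 3 → ℝ := fun i => x i.succ

section pdlemmas
variable {n : ℕ} {x : Fin n → ℝ} {F G : (Fin n → ℝ) → ℝ} {k : Fin n}

lemma pd_add (hF : DifferentiableAt ℝ F x) (hG : DifferentiableAt ℝ G x) :
    pd k (fun y => F y + G y) x = pd k F x + pd k G x := by
  simp [pd, fderiv_fun_add hF hG]

lemma pd_sub (hF : DifferentiableAt ℝ F x) (hG : DifferentiableAt ℝ G x) :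
    pd k (fun y => F y - G y) x = pd k F x - pd k G x := by
  simp [pd, fderiv_fun_sub hF hG]

lemma pd_const_mul (c : ℝ) (hF : DifferentiableAt ℝ F x) :
    pd k (fun y => c * F y) x = c * pd k F x := by
  simp [pd, fderiv_const_mul hF c]

lemma pd_const (c : ℝ) : pd k (fun _ : Fin n → ℝ => c) x = 0 := by
  simp [pd]

lemma pd_mul (hF : DifferentiableAt ℝ F x) (hG : DifferentiableAt ℝ G x) :
    pd k (fun y => F y * G y) x = pd k F x * G x + F x * pd k G x := by
  simp [pd, fderiv_fun_mul hF hG]; ring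

lemma pd_comp {f : ℝ → ℝ} (hf : DifferentiableAt ℝ f (F x)) (hF : DifferentiableAt ℝ F x) :
    pd k (fun y => f (F y)) x = deriv f (F x) * pd k F x := by
  rw [pd, show (fun y => f (F y)) = f ∘ F from rfl, fderiv_comp x hf hF,
      ContinuousLinearMap.comp_apply]
  rw [show (fderiv ℝ F x) (Pi.single k 1) = ((fderiv ℝ F x) (Pi.single k 1)) • (1:ℝ) by simp,
      map_smul]
  simp [fderiv_apply_one_eq_deriv, pd]
  ring

lemma pd_inv (hF : DifferentiableAt ℝ F x) (h0 : F x ≠ 0) :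
    pd k (fun y => (F y)⁻¹) x = -pd k F x / (F x) ^ 2 := by
  rw [pd_comp (differentiableAt_inv h0) hF]
  simp [deriv_inv]
  ring

lemma pd_sum {m : ℕ} {F : Fin m → (Fin n → ℝ) → ℝ}
    (hF : ∀ i, DifferentiableAt ℝ (F i) x) :
    pd k (fun y => ∑ i, F i y) x = ∑ i, pd k (F i) x := by
  simp [pd, fderiv_fun_sum (fun i _ => hF i)]

lemma diff_coord (t : Fin n) : Differentiable ℝ (fun y : Fin n → ℝ => y t) :=
  (ContinuousLinearMap.proj t : (Fin n → ℝ) →L[ℝ] ℝ).differentiable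

lemma pd_coord (j : Fin n) :
    pd k (fun y : Fin n → ℝ => y j) x = if j = k then 1 else 0 := by
  have : (fun y : Fin n → ℝ => y j) = (ContinuousLinearMap.proj j : (Fin n → ℝ) →L[ℝ] ℝ) := rfl
  rw [pd, this, ContinuousLinearMap.fderiv]
  simp [Pi.single_apply]

lemma diff_affine (c b1 b2 : ℝ) (t1 t2 : Fin n) :
    Differentiable ℝ (fun y : Fin n → ℝ => c + (b1 * y t1 - b2 * y t2)) :=
  (((diff_coord t1).const_mul b1).sub ((diff_coord t2).const_mul b2)).const_add c

lemma pd_affine (c b1 b2 : ℝ) (t1 t2 : Fin n) :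
    pd k (fun y : Fin n → ℝ => c + (b1 * y t1 - b2 * y t2)) x
      = b1 * (if t1 = k then 1 else 0) - b2 * (if t2 = k then 1 else 0) := by
  have h1 : DifferentiableAt ℝ (fun y : Fin n → ℝ => b1 * y t1) x :=
    ((diff_coord t1).differentiableAt).const_mul b1
  have h2 : DifferentiableAt ℝ (fun y : Fin n → ℝ => b2 * y t2) x :=
    ((diff_coord t2).differentiableAt).const_mul b2
  rw [show (fun y : Fin n → ℝ => c + (b1 * y t1 - b2 * y t2))
      = (fun y : Fin n → ℝ => (fun _ => c) y + (fun y : Fin n → ℝ => b1 * y t1 - b2 * y t2) y)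
      from rfl,
    pd_add (differentiableAt_const c) (h1.fun_sub h2), pd_const,
    pd_sub h1 h2, pd_const_mul b1 ((diff_coord t1).differentiableAt),
    pd_const_mul b2 ((diff_coord t2).differentiableAt), pd_coord, pd_coord]
  ring

end pdlemmas

lemma deriv_of_quadratic (q : ℝ → ℝ) (c0 c1 c2 : ℝ)
    (h : ∀ t, q t = c0 + c1 * t + c2 * t ^ 2) : deriv q 0 = c1 := by
  have hq : q = fun t => c0 + c1 * t + c2 * t ^ 2 := funext h
  rw [hq]
  have h1 : HasDerivAt (fun t : ℝ => c0 + c1 * t + c2 * t ^ 2)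
      (c1 * 1 + c2 * ((2:ℕ) * 0 ^ (2-1))) 0 :=
    ((((hasDerivAt_id 0).const_mul c1).const_add c0)).add ((hasDerivAt_pow 2 0).const_mul c2)
  simpa using h1.deriv

set_option maxHeartbeats 0 in
/-- Sub-symmetry identity for the less constrained Euler system:
the first variation of Σᵢ aⁱΔᵢ + vΔ₄ under uⁱ ↦ uⁱ + ε f(v)aⁱ/|a|²,
p ↦ p − ε v f(v)/|a|², at ε = 0, equals f'(v)·(ΣᵢaⁱΔᵢ − Δ₅) + f(v)·Δ₄
pointwise.  Coordinates: 0 = t, 1,2,3 spatial; a(r) = α + β×r nonvanishing. -/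
theorem constrained_euler_subsymmetry
    (u : Fin 3 → (Fin 4 → ℝ) → ℝ) (p : (Fin 4 → ℝ) → ℝ)
    (hu : ∀ i, ContDiff ℝ (⊤ : ℕ∞) (u i)) (hp : ContDiff ℝ (⊤ : ℕ∞) p)
    (α β : Fin 3 → ℝ) (a : (Fin 3 → ℝ) → Fin 3 → ℝ)
    (ha : ∀ r, a r = α + crossProduct β r) (ha0 : ∀ r, a r ≠ 0)
    (f : ℝ → ℝ) (hf : ContDiff ℝ (⊤ : ℕ∞) f)
    (v : (Fin 4 → ℝ) → ℝ) (hv : ∀ x, v x = ∑ i, a (sp x) i * u i x)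
    (comb : (Fin 3 → (Fin 4 → ℝ) → ℝ) → ((Fin 4 → ℝ) → ℝ) → (Fin 4 → ℝ) → ℝ)
    (hcomb : ∀ U P x, comb U P x =
      (∑ i, a (sp x) i *
          (pd 0 (U i) x + (∑ j, U j x * pd j.succ (U i) x) + pd i.succ P x))
        + (∑ i, a (sp x) i * U i x) * (∑ i, pd i.succ (U i) x)) :
    ∀ x, deriv (fun ε : ℝ =>
        comb (fun i y => u i y + ε * f (v y) * a (sp y) i / (∑ m, a (sp y) m ^ 2))
             (fun y => p y - ε * v y * f (v y) / (∑ m, a (sp y) m ^ 2)) x) 0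
      = deriv f (v x) *
          ((∑ i, a (sp x) i *
              (pd 0 (u i) x + (∑ j, u j x * pd j.succ (u i) x) + pd i.succ p x))
            - ∑ i, a (sp x) i * pd i.succ p x)
        + f (v x) * ∑ i, pd i.succ (u i) x := by
  intro x
  have es0 : (Fin.succ (0 : Fin 3)) = (1 : Fin 4) := rfl
  have es1 : (Fin.succ (1 : Fin 3)) = (2 : Fin 4) := rfl
  have es2 : (Fin.succ (2 : Fin 3)) = (3 : Fin 4) := rfl
  -- explicit affine form of the components of a ∘ sp
  have hA0 : (fun y : Fin 4 → ℝ => a (sp y) 0) = fun y => α 0 + (β 1 * y 3 - β 2 * y 2) := by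
    funext y; rw [ha]; simp [cross_apply, sp, es0, es1, es2]
  have hA1 : (fun y : Fin 4 → ℝ => a (sp y) 1) = fun y => α 1 + (β 2 * y 1 - β 0 * y 3) := by
    funext y; rw [ha]; simp [cross_apply, sp, es0, es1, es2]
  have hA2 : (fun y : Fin 4 → ℝ => a (sp y) 2) = fun y => α 2 + (β 0 * y 2 - β 1 * y 1) := by
    funext y; rw [ha]; simp [cross_apply, sp, es0, es1, es2]
  -- differentiability of components
  have hdA : ∀ i, Differentiable ℝ (fun y : Fin 4 → ℝ => a (sp y) i) := by
    intro i
    fin_cases i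
    · show Differentiable ℝ (fun y : Fin 4 → ℝ => a (sp y) 0)
      rw [hA0]; exact diff_affine _ _ _ _ _
    · show Differentiable ℝ (fun y : Fin 4 → ℝ => a (sp y) 1)
      rw [hA1]; exact diff_affine _ _ _ _ _
    · show Differentiable ℝ (fun y : Fin 4 → ℝ => a (sp y) 2)
      rw [hA2]; exact diff_affine _ _ _ _ _
  have hdu : ∀ i, DifferentiableAt ℝ (u i) x := fun i => ((hu i).differentiable (by simp)).differentiableAt
  have hdp : DifferentiableAt ℝ p x := (hp.differentiable (by simp)).differentiableAt
  have hvfun : v = fun y => ∑ i, a (sp y) i * u i y := funext hv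
  have hdv : Differentiable ℝ v := by
    rw [hvfun]
    exact Differentiable.fun_sum fun i _ => (hdA i).mul ((hu i).differentiable (by simp))
  have hdfv : DifferentiableAt ℝ (fun y => f (v y)) x :=
    DifferentiableAt.comp x ((hf.differentiable (by simp)).differentiableAt) (hdv x)
  have hSne : ∀ y : Fin 4 → ℝ, (∑ m, a (sp y) m ^ 2) ≠ 0 := by
    intro y
    have hpos : (0:ℝ) < ∑ m, a (sp y) m ^ 2 := by
      obtain ⟨m, hm⟩ : ∃ m, a (sp y) m ≠ 0 := by
        by_contra h; push_neg at h; exact ha0 (sp y) (funext h)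
      exact Finset.sum_pos' (fun i _ => sq_nonneg _) ⟨m, Finset.mem_univ m, by positivity⟩
    exact ne_of_gt hpos
  -- opaque abbreviations
  obtain ⟨Sf, hSf⟩ : ∃ g : (Fin 4 → ℝ) → ℝ, g = fun y => ∑ m, a (sp y) m ^ 2 := ⟨_, rfl⟩
  obtain ⟨Gm, hGm⟩ : ∃ g : Fin 3 → (Fin 4 → ℝ) → ℝ,
      g = fun i y => f (v y) * a (sp y) i * (Sf y)⁻¹ := ⟨_, rfl⟩
  obtain ⟨Pm, hPm⟩ : ∃ g : (Fin 4 → ℝ) → ℝ, g = fun y => v y * f (v y) * (Sf y)⁻¹ := ⟨_, rfl⟩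
  have hSfne : Sf x ≠ 0 := by rw [hSf]; exact hSne x
  have hdSf : DifferentiableAt ℝ Sf x := by
    rw [hSf]; exact (Differentiable.fun_sum fun m _ => (hdA m).pow 2).differentiableAt
  have hdSinv : DifferentiableAt ℝ (fun y => (Sf y)⁻¹) x := hdSf.inv hSfne
  have hdGm : ∀ i, DifferentiableAt ℝ (Gm i) x := by
    intro i; rw [hGm]; exact ((hdfv.mul ((hdA i) x)).mul hdSinv)
  have hdPm : DifferentiableAt ℝ Pm x := by
    rw [hPm]; exact (((hdv x).mul hdfv).mul hdSinv)
  -- pd formulas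
  have hpdv : ∀ k : Fin 4, pd k v x
      = ∑ i, (pd k (fun y => a (sp y) i) x * u i x + a (sp x) i * pd k (u i) x) := by
    intro k
    rw [hvfun, pd_sum (fun i => ((hdA i) x).fun_mul (hdu i))]
    exact Finset.sum_congr rfl fun i _ => pd_mul ((hdA i) x) (hdu i)
  have hpdS : ∀ k : Fin 4, pd k Sf x
      = ∑ m, 2 * a (sp x) m * pd k (fun y => a (sp y) m) x := by
    intro k
    rw [hSf, pd_sum (fun m => ((hdA m) x).fun_pow 2)]
    refine Finset.sum_congr rfl fun m _ => ?_
    rw [show (fun y : Fin 4 → ℝ => a (sp y) m ^ 2) = fun y => a (sp y) m * a (sp y) m from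
      funext fun y => sq (a (sp y) m), pd_mul ((hdA m) x) ((hdA m) x)]
    ring
  have hg : ∀ (k : Fin 4) (i : Fin 3), pd k (Gm i) x
      = (deriv f (v x) * pd k v x * a (sp x) i + f (v x) * pd k (fun y => a (sp y) i) x)
          * (Sf x)⁻¹
        + f (v x) * a (sp x) i * (-pd k Sf x / Sf x ^ 2) := by
    intro k i
    simp only [hGm]
    rw [pd_mul (hdfv.fun_mul ((hdA i) x)) hdSinv, pd_mul hdfv ((hdA i) x),
      pd_comp ((hf.differentiable (by simp)).differentiableAt) (hdv x),
      pd_inv hdSf hSfne]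
  have hpsi : ∀ k : Fin 4, pd k Pm x
      = (pd k v x * f (v x) + v x * (deriv f (v x) * pd k v x)) * (Sf x)⁻¹
        + v x * f (v x) * (-pd k Sf x / Sf x ^ 2) := by
    intro k
    simp only [hPm]
    rw [pd_mul ((hdv x).fun_mul hdfv) hdSinv, pd_mul (hdv x) hdfv,
      pd_comp ((hf.differentiable (by simp)).differentiableAt) (hdv x),
      pd_inv hdSf hSfne]
  -- explicit values of the derivatives of a ∘ sp
  have hM0 : ∀ k : Fin 4, pd k (fun y : Fin 4 → ℝ => a (sp y) 0) x
      = β 1 * (if 3 = k then 1 else 0) - β 2 * (if 2 = k then 1 else 0) := by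
    intro k; rw [hA0, pd_affine]
  have hM1 : ∀ k : Fin 4, pd k (fun y : Fin 4 → ℝ => a (sp y) 1) x
      = β 2 * (if 1 = k then 1 else 0) - β 0 * (if 3 = k then 1 else 0) := by
    intro k; rw [hA1, pd_affine]
  have hM2 : ∀ k : Fin 4, pd k (fun y : Fin 4 → ℝ => a (sp y) 2) x
      = β 0 * (if 2 = k then 1 else 0) - β 1 * (if 1 = k then 1 else 0) := by
    intro k; rw [hA2, pd_affine]
  -- the evolution of the combination as an explicit quadratic polynomial in ε
  set Q : ℝ → ℝ := fun ε =>
      (∑ i, a (sp x) i * ((pd 0 (u i) x + ε * pd 0 (Gm i) x)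
          + (∑ j, (u j x + ε * Gm j x) * (pd j.succ (u i) x + ε * pd j.succ (Gm i) x))
          + (pd i.succ p x - ε * pd i.succ Pm x)))
        + (∑ i, a (sp x) i * (u i x + ε * Gm i x))
          * (∑ i, (pd i.succ (u i) x + ε * pd i.succ (Gm i) x)) with hQ
  have hexp : ∀ ε : ℝ, comb (fun i y => u i y + ε * f (v y) * a (sp y) i / (∑ m, a (sp y) m ^ 2))
      (fun y => p y - ε * v y * f (v y) / (∑ m, a (sp y) m ^ 2)) x = Q ε := by
    intro ε
    have hU : ∀ i : Fin 3, (fun y => u i y + ε * f (v y) * a (sp y) i / (∑ m, a (sp y) m ^ 2))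
        = fun y => u i y + ε * Gm i y := by
      intro i; funext y; simp only [hGm, hSf]; ring
    have hPf : (fun y => p y - ε * v y * f (v y) / (∑ m, a (sp y) m ^ 2))
        = fun y => p y - ε * Pm y := by
      funext y; simp only [hPm, hSf]; ring
    have hlinU : ∀ (k : Fin 4) (i : Fin 3),
        pd k (fun y => u i y + ε * Gm i y) x = pd k (u i) x + ε * pd k (Gm i) x := by
      intro k i
      rw [pd_add (hdu i) ((hdGm i).const_mul ε), pd_const_mul ε (hdGm i)]
    have hlinP : ∀ k : Fin 4,
        pd k (fun y => p y - ε * Pm y) x = pd k p x - ε * pd k Pm x := by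
      intro k
      rw [pd_sub hdp (hdPm.const_mul ε), pd_const_mul ε hdPm]
    rw [hcomb]
    simp only [hU, hPf, hlinU, hlinP, hQ]
    simp only [hGm, hSf, Fin.sum_univ_three]
    ring
  rw [funext hexp]
  have hquad : ∀ t : ℝ, Q t = Q 0 + ((Q 1 - Q (-1))/2) * t + ((Q 1 + Q (-1))/2 - Q 0) * t^2 := by
    intro t; simp only [hQ, Fin.sum_univ_three]; ring
  rw [show deriv Q 0 = (Q 1 - Q (-1))/2 from
    deriv_of_quadratic Q (Q 0) ((Q 1 - Q (-1))/2) ((Q 1 + Q (-1))/2 - Q 0) hquad]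
  -- now pure algebra
  have hSfx : Sf x = a (sp x) 0 ^ 2 + a (sp x) 1 ^ 2 + a (sp x) 2 ^ 2 := by
    simp only [hSf, Fin.sum_univ_three]
  have h2 : a (sp x) 0 ^ 2 + a (sp x) 1 ^ 2 + a (sp x) 2 ^ 2 ≠ 0 := hSfx ▸ hSfne
  have hvx : v x = a (sp x) 0 * u 0 x + a (sp x) 1 * u 1 x + a (sp x) 2 * u 2 x := by
    rw [hv]; rw [Fin.sum_univ_three]
  have hGmx : ∀ j : Fin 3, Gm j x = f (v x) * a (sp x) j * (Sf x)⁻¹ := by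
    intro j; rw [hGm]
  have hC1 : (Q 1 - Q (-1)) / 2 =
      (∑ i, a (sp x) i * pd 0 (Gm i) x)
      + Gm 0 x * (∑ i, a (sp x) i * pd 1 (u i) x)
      + Gm 1 x * (∑ i, a (sp x) i * pd 2 (u i) x)
      + Gm 2 x * (∑ i, a (sp x) i * pd 3 (u i) x)
      + u 0 x * (∑ i, a (sp x) i * pd 1 (Gm i) x)
      + u 1 x * (∑ i, a (sp x) i * pd 2 (Gm i) x)
      + u 2 x * (∑ i, a (sp x) i * pd 3 (Gm i) x)
      - (∑ i, a (sp x) i * pd i.succ Pm x)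
      + (∑ i, a (sp x) i * Gm i x) * (∑ i, pd i.succ (u i) x)
      + (∑ i, a (sp x) i * u i x) * (∑ i, pd i.succ (Gm i) x) := by
    simp only [hQ, Fin.sum_univ_three, es0, es1, es2]
    ring
  have E1 : (∑ i, a (sp x) i * pd 0 (Gm i) x) = deriv f (v x) * pd 0 v x := by
    simp only [hg, hpdS, Fin.sum_univ_three, es0, es1, es2, hM0, hM1, hM2]
    simp only [Fin.reduceEq, reduceIte, mul_zero, mul_one, zero_mul, one_mul, sub_zero,
      zero_sub, add_zero, zero_add, neg_neg, mul_neg, neg_zero]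
    simp only [hSfx]
    field_simp
    try ring
  have E2_0 : (∑ i, a (sp x) i * pd 1 (Gm i) x) = deriv f (v x) * pd 1 v x
      - f (v x) * (a (sp x) 1 * β 2 - a (sp x) 2 * β 1) * (Sf x)⁻¹ := by
    simp only [hg, hpdS, Fin.sum_univ_three, es0, es1, es2, hM0, hM1, hM2]
    simp only [Fin.reduceEq, reduceIte, mul_zero, mul_one, zero_mul, one_mul, sub_zero,
      zero_sub, add_zero, zero_add, neg_neg, mul_neg, neg_zero]
    simp only [hSfx]
    field_simp
    ring
  have E2_1 : (∑ i, a (sp x) i * pd 2 (Gm i) x) = deriv f (v x) * pd 2 v x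
      - f (v x) * (a (sp x) 2 * β 0 - a (sp x) 0 * β 2) * (Sf x)⁻¹ := by
    simp only [hg, hpdS, Fin.sum_univ_three, es0, es1, es2, hM0, hM1, hM2]
    simp only [Fin.reduceEq, reduceIte, mul_zero, mul_one, zero_mul, one_mul, sub_zero,
      zero_sub, add_zero, zero_add, neg_neg, mul_neg, neg_zero]
    simp only [hSfx]
    field_simp
    ring
  have E2_2 : (∑ i, a (sp x) i * pd 3 (Gm i) x) = deriv f (v x) * pd 3 v x
      - f (v x) * (a (sp x) 0 * β 1 - a (sp x) 1 * β 0) * (Sf x)⁻¹ := by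
    simp only [hg, hpdS, Fin.sum_univ_three, es0, es1, es2, hM0, hM1, hM2]
    simp only [Fin.reduceEq, reduceIte, mul_zero, mul_one, zero_mul, one_mul, sub_zero,
      zero_sub, add_zero, zero_add, neg_neg, mul_neg, neg_zero]
    simp only [hSfx]
    field_simp
    ring
  have E3 : (∑ i, a (sp x) i * Gm i x) = f (v x) := by
    simp only [hGm, Fin.sum_univ_three, hSfx]
    field_simp
  have E4 : (∑ i, a (sp x) i * pd i.succ Pm x) =
      (f (v x) + v x * deriv f (v x))
        * (a (sp x) 0 * pd 1 v x + a (sp x) 1 * pd 2 v x + a (sp x) 2 * pd 3 v x) * (Sf x)⁻¹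
      - 2 * v x * f (v x)
        * (a (sp x) 0 * (a (sp x) 1 * β 2 - a (sp x) 2 * β 1)
          + a (sp x) 1 * (a (sp x) 2 * β 0 - a (sp x) 0 * β 2)
          + a (sp x) 2 * (a (sp x) 0 * β 1 - a (sp x) 1 * β 0)) / Sf x ^ 2 := by
    simp only [hpsi, hpdS, Fin.sum_univ_three, es0, es1, es2, hM0, hM1, hM2]
    simp only [Fin.reduceEq, reduceIte, mul_zero, mul_one, zero_mul, one_mul, sub_zero,
      zero_sub, add_zero, zero_add, neg_neg, mul_neg, neg_zero]
    field_simp [hSfne]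
    ring
  have E5 : (∑ i, pd i.succ (Gm i) x) =
      deriv f (v x)
        * (a (sp x) 0 * pd 1 v x + a (sp x) 1 * pd 2 v x + a (sp x) 2 * pd 3 v x) * (Sf x)⁻¹
      - 2 * f (v x)
        * (a (sp x) 0 * (a (sp x) 1 * β 2 - a (sp x) 2 * β 1)
          + a (sp x) 1 * (a (sp x) 2 * β 0 - a (sp x) 0 * β 2)
          + a (sp x) 2 * (a (sp x) 0 * β 1 - a (sp x) 1 * β 0)) / Sf x ^ 2 := by
    simp only [hg, hpdS, Fin.sum_univ_three, es0, es1, es2, hM0, hM1, hM2]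
    simp only [Fin.reduceEq, reduceIte, mul_zero, mul_one, zero_mul, one_mul, sub_zero,
      zero_sub, add_zero, zero_add, neg_neg, mul_neg, neg_zero]
    field_simp [hSfne]
    ring
  have hdv0 : pd 0 v x = a (sp x) 0 * pd 0 (u 0) x + a (sp x) 1 * pd 0 (u 1) x
      + a (sp x) 2 * pd 0 (u 2) x := by
    rw [hpdv 0]
    simp only [Fin.sum_univ_three, hM0, hM1, hM2]
    simp only [Fin.reduceEq, reduceIte, mul_zero, mul_one, zero_mul, one_mul, sub_zero,
      zero_sub, add_zero, zero_add, neg_neg, mul_neg, neg_zero]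
    try ring
  have hdv1 : pd 1 v x = β 2 * u 1 x - β 1 * u 2 x
      + (a (sp x) 0 * pd 1 (u 0) x + a (sp x) 1 * pd 1 (u 1) x + a (sp x) 2 * pd 1 (u 2) x) := by
    rw [hpdv 1]
    simp only [Fin.sum_univ_three, hM0, hM1, hM2]
    simp only [Fin.reduceEq, reduceIte, mul_zero, mul_one, zero_mul, one_mul, sub_zero,
      zero_sub, add_zero, zero_add, neg_neg, mul_neg, neg_zero]
    try ring
  have hdv2 : pd 2 v x = β 0 * u 2 x - β 2 * u 0 x
      + (a (sp x) 0 * pd 2 (u 0) x + a (sp x) 1 * pd 2 (u 1) x + a (sp x) 2 * pd 2 (u 2) x) := by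
    rw [hpdv 2]
    simp only [Fin.sum_univ_three, hM0, hM1, hM2]
    simp only [Fin.reduceEq, reduceIte, mul_zero, mul_one, zero_mul, one_mul, sub_zero,
      zero_sub, add_zero, zero_add, neg_neg, mul_neg, neg_zero]
    try ring
  have hdv3 : pd 3 v x = β 1 * u 0 x - β 0 * u 1 x
      + (a (sp x) 0 * pd 3 (u 0) x + a (sp x) 1 * pd 3 (u 1) x + a (sp x) 2 * pd 3 (u 2) x) := by
    rw [hpdv 3]
    simp only [Fin.sum_univ_three, hM0, hM1, hM2]
    simp only [Fin.reduceEq, reduceIte, mul_zero, mul_one, zero_mul, one_mul, sub_zero,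
      zero_sub, add_zero, zero_add, neg_neg, mul_neg, neg_zero]
    try ring
  rw [hC1, E1, E2_0, E2_1, E2_2, E3, E4, E5]
  simp only [hGmx, hdv0, hdv1, hdv2, hdv3, hvx, Fin.sum_univ_three, es0, es1, es2]
  field_simp [hSfne]
  ring
end

section
/- (Sub-symmetries generate conservation laws for quasi-Noether systems, first-order scalar case.) Let Δ : J → ℝ be a smooth differential function on first-order jet variables with p independent and q dependent variables, and let Ξ : J → ℝ be smooth. Suppose (quasi-Noether) there are smooth functions Γ^a on J with E_a(ΞΔ) = Γ^a·Δ for each a, and (sub-symmetry) there is a smooth function Λ on J with X_α(ΞΔ) = Λ·Δ, where X_α is the prolonged evolutionary field with characteristic α and E_a is the Euler operator. Then for every smooth u with Δ[u] = 0 identically on an open set, the p-tuple R^i(ΞΔ) = Σ_a α^a ∂(ΞΔ)/∂u^a_i satisfies Σᵢ Dᵢ R^i(ΞΔ) = 0 on that set; indeed Σᵢ Dᵢ R^i(ΞΔ) = (Λ − Σ_a α^a Γ^a)·Δ identically. -/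
/-- The first-order jet space with p independent and q dependent variables. -/
abbrev Jet (p q : ℕ) := (Fin p → ℝ) × (Fin q → ℝ) × (Fin q → Fin p → ℝ)

/-- The first-order jet of a function u at x. -/
noncomputable def jet {p q : ℕ} (u : (Fin p → ℝ) → Fin q → ℝ) (x : Fin p → ℝ) :
    Jet p q :=
  (x, u x, fun a i => pd i (fun y => u y a) x)

/-- Partial derivative ∂F/∂u^a of a differential function on the jet space. -/
noncomputable def pdu {p q : ℕ} (F : Jet p q → ℝ) (a : Fin q) (z : Jet p q) : ℝ :=
  fderiv ℝ F z (0, Pi.single a 1, 0)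

/-- Partial derivative ∂F/∂u^a_i of a differential function on the jet space. -/
noncomputable def pdu1 {p q : ℕ} (F : Jet p q → ℝ) (a : Fin q) (i : Fin p)
    (z : Jet p q) : ℝ :=
  fderiv ℝ F z (0, 0, Pi.single a (Pi.single i 1))

/-- The Euler operator E_a(F) = ∂F/∂u^a − Σᵢ Dᵢ(∂F/∂u^a_i), evaluated along u. -/
noncomputable def eulerOp {p q : ℕ} (F : Jet p q → ℝ) (a : Fin q)
    (u : (Fin p → ℝ) → Fin q → ℝ) (x : Fin p → ℝ) : ℝ :=
  pdu F a (jet u x) - ∑ i, pd i (fun y => pdu1 F a i (jet u y)) x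

/-- The prolonged evolutionary vector field with characteristic α acting on F,
evaluated along u:  X_α F = Σ_a α^a ∂F/∂u^a + Σ_{a,i} (Dᵢα^a) ∂F/∂u^a_i. -/
noncomputable def evolAct {p q : ℕ} (α : Jet p q → Fin q → ℝ) (F : Jet p q → ℝ)
    (u : (Fin p → ℝ) → Fin q → ℝ) (x : Fin p → ℝ) : ℝ :=
  (∑ a, α (jet u x) a * pdu F a (jet u x))
  + ∑ a, ∑ i, pd i (fun y => α (jet u y) a) x * pdu1 F a i (jet u x)

/-- The Noether current components R^i(F) = Σ_a α^a ∂F/∂u^a_i along u. -/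
noncomputable def noetherR {p q : ℕ} (α : Jet p q → Fin q → ℝ) (F : Jet p q → ℝ)
    (u : (Fin p → ℝ) → Fin q → ℝ) (i : Fin p) (x : Fin p → ℝ) : ℝ :=
  ∑ a, α (jet u x) a * pdu1 F a i (jet u x)

lemma fderiv_apply_contDiff {E : Type*} [NormedAddCommGroup E] [NormedSpace ℝ E]
    {f : E → ℝ} (hf : ContDiff ℝ (⊤ : ℕ∞) f) (v : E) :
    ContDiff ℝ (⊤ : ℕ∞) (fun x => fderiv ℝ f x v) :=
  (hf.fderiv_right (by simp)).clm_apply contDiff_const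

lemma jet_contDiff {p q : ℕ} {u : (Fin p → ℝ) → Fin q → ℝ} (hu : ContDiff ℝ (⊤ : ℕ∞) u) :
    ContDiff ℝ (⊤ : ℕ∞) (jet u) := by
  refine contDiff_id.prodMk (hu.prodMk ?_)
  refine contDiff_pi.2 fun a => contDiff_pi.2 fun i => ?_
  exact fderiv_apply_contDiff (contDiff_pi.1 hu a) (Pi.single i 1)

lemma pd_sum_s15 {p : ℕ} {ι : Type*} (s : Finset ι) (f : ι → (Fin p → ℝ) → ℝ)
    (hf : ∀ a ∈ s, ContDiff ℝ (⊤ : ℕ∞) (f a)) (i : Fin p) (x : Fin p → ℝ) :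
    pd i (fun y => ∑ a ∈ s, f a y) x = ∑ a ∈ s, pd i (f a) x := by
  unfold pd
  rw [fderiv_fun_sum (fun a ha => (hf a ha).differentiable (by simp) x)]
  simp

lemma pd_mul_s15 {p : ℕ} {f g : (Fin p → ℝ) → ℝ} (hf : ContDiff ℝ (⊤ : ℕ∞) f) (hg : ContDiff ℝ (⊤ : ℕ∞) g)
    (i : Fin p) (x : Fin p → ℝ) :
    pd i (fun y => f y * g y) x = pd i f x * g x + f x * pd i g x := by
  unfold pd
  rw [fderiv_fun_mul (hf.differentiable (by simp) x) (hg.differentiable (by simp) x)]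
  simp
  ring

/-- Sub-symmetries generate conservation laws for quasi-Noether systems
(first-order scalar case):  if E_a(ΞΔ) = Γ^a·Δ and X_α(ΞΔ) = Λ·Δ, then
Σᵢ Dᵢ R^i(ΞΔ) = (Λ − Σ_a α^a Γ^a)·Δ identically along every smooth u, and hence
the divergence vanishes wherever Δ[u] = 0 identically on an open set. -/
theorem subsymmetry_conservation (p q : ℕ)
    (Δ Ξ : Jet p q → ℝ) (hΔ : ContDiff ℝ (⊤ : ℕ∞) Δ) (hΞ : ContDiff ℝ (⊤ : ℕ∞) Ξ)
    (α : Jet p q → Fin q → ℝ) (hα : ContDiff ℝ (⊤ : ℕ∞) α)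
    (Γ : Fin q → Jet p q → ℝ) (hΓ : ∀ a, ContDiff ℝ (⊤ : ℕ∞) (Γ a))
    (Λ : Jet p q → ℝ) (hΛ : ContDiff ℝ (⊤ : ℕ∞) Λ)
    (hQN : ∀ (u : (Fin p → ℝ) → Fin q → ℝ), ContDiff ℝ (⊤ : ℕ∞) u → ∀ (a : Fin q) x,
      eulerOp (fun z => Ξ z * Δ z) a u x = Γ a (jet u x) * Δ (jet u x))
    (hSub : ∀ (u : (Fin p → ℝ) → Fin q → ℝ), ContDiff ℝ (⊤ : ℕ∞) u → ∀ x,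
      evolAct α (fun z => Ξ z * Δ z) u x = Λ (jet u x) * Δ (jet u x)) :
    ∀ (u : (Fin p → ℝ) → Fin q → ℝ), ContDiff ℝ (⊤ : ℕ∞) u →
      (∀ x, ∑ i, pd i (fun y => noetherR α (fun z => Ξ z * Δ z) u i y) x
          = (Λ (jet u x) - ∑ a, α (jet u x) a * Γ a (jet u x)) * Δ (jet u x))
      ∧ (∀ s : Set (Fin p → ℝ), IsOpen s → (∀ x ∈ s, Δ (jet u x) = 0) →
          ∀ x ∈ s,
            ∑ i, pd i (fun y => noetherR α (fun z => Ξ z * Δ z) u i y) x = 0) := by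
  intro u hu
  set F : Jet p q → ℝ := fun z => Ξ z * Δ z with hFdef
  have hF : ContDiff ℝ (⊤ : ℕ∞) F := hΞ.mul hΔ
  have hjet : ContDiff ℝ (⊤ : ℕ∞) (jet u) := jet_contDiff hu
  have hαa : ∀ a, ContDiff ℝ (⊤ : ℕ∞) (fun y => α (jet u y) a) :=
    fun a => contDiff_pi.1 (hα.comp hjet) a
  have hpdu1 : ∀ a i, ContDiff ℝ (⊤ : ℕ∞) (fun y => pdu1 F a i (jet u y)) := by
    intro a i
    exact (fderiv_apply_contDiff hF _).comp hjet
  have step : ∀ (i : Fin p) x,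
      pd i (fun y => noetherR α F u i y) x
        = ∑ a, (pd i (fun y => α (jet u y) a) x * pdu1 F a i (jet u x)
            + α (jet u x) a * pd i (fun y => pdu1 F a i (jet u y)) x) := by
    intro i x
    have : pd i (fun y => noetherR α F u i y) x
        = ∑ a, pd i (fun y => α (jet u y) a * pdu1 F a i (jet u y)) x := by
      unfold noetherR
      exact pd_sum_s15 _ _ (fun a _ => (hαa a).mul (hpdu1 a i)) i x
    rw [this]
    exact Finset.sum_congr rfl fun a _ => pd_mul_s15 (hαa a) (hpdu1 a i) i x
  have key : ∀ x, ∑ i, pd i (fun y => noetherR α F u i y) x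
      = (Λ (jet u x) - ∑ a, α (jet u x) a * Γ a (jet u x)) * Δ (jet u x) := by
    intro x
    have h1 : ∑ i, pd i (fun y => noetherR α F u i y) x
        = evolAct α F u x - ∑ a, α (jet u x) a * eulerOp F a u x := by
      simp only [step, evolAct, eulerOp, Finset.sum_add_distrib, mul_sub,
        Finset.sum_sub_distrib, Finset.mul_sum]
      rw [Finset.sum_comm (f := fun (i : Fin p) (a : Fin q) =>
            pd i (fun y => α (jet u y) a) x * pdu1 F a i (jet u x)),
          Finset.sum_comm (f := fun (i : Fin p) (a : Fin q) =>
            α (jet u x) a * pd i (fun y => pdu1 F a i (jet u y)) x)]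
      ring
    rw [h1, hSub u hu x]
    have h2 : ∀ a : Fin q, eulerOp F a u x = Γ a (jet u x) * Δ (jet u x) :=
      fun a => hQN u hu a x
    simp only [h2]
    rw [sub_mul, Finset.sum_mul]
    congr 1
    exact Finset.sum_congr rfl fun a _ => by ring
  refine ⟨key, fun s _ hs x hx => ?_⟩
  rw [key x, hs x hx, mul_zero]
end
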